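/- Termination can be proved by the interpretation ⟦Z⟧=(0,0), ⟦H⟧=(0,0), ⟦E⟧=(1,0), ⟦W_i⟧=(1,i), extended to words by ⟦G·F⟧ = (⟦G⟧₁ + 2·⟦F⟧₁, ⟦G⟧₂ + 2·⟦F⟧₂): for each rewriting rule among H·W_i → W_{i+1}·H, H·E → E·H, W_i·W_j → W_j·W_i (i < j), the interpretation of the left-hand side is strictly greater than that of the right-hand side in the lexicographic order on ℕ × ℕ. -/
import Mathlib

/-- Letters of the alphabet: `Z`, `H`, `E` and `W i` for `i : ℕ`. -/
inductive Letter
  | Z : Letter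
  | H : Letter
  | E : Letter
  | W : ℕ → Letter

open Letter

/-- Interpretation of a letter in `ℕ × ℕ`. -/
def interpLetter : Letter → ℕ × ℕ
  | Z => (0, 0)
  | H => (0, 0)
  | E => (1, 0)
  | W i => (1, i)

/-- Interpretation of a word: `⟦G · F⟧ = (⟦G⟧₁ + 2·⟦F⟧₁, ⟦G⟧₂ + 2·⟦F⟧₂)`,
computed letter by letter. -/
def interp : List Letter → ℕ × ℕ
  | [] => (0, 0)
  | a :: w => ((interpLetter a).1 + 2 * (interp w).1,
               (interpLetter a).2 + 2 * (interp w).2)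

/-- For each rewriting rule, the interpretation of the left-hand side is
strictly greater than that of the right-hand side in the lexicographic order
on `ℕ × ℕ`. -/
theorem interp_decreasing :
    (∀ i : ℕ, Prod.Lex (· < ·) (· < ·) (interp [W (i + 1), H]) (interp [H, W i])) ∧
    (Prod.Lex (· < ·) (· < ·) (interp [E, H]) (interp [H, E])) ∧
    (∀ i j : ℕ, i < j →
      Prod.Lex (· < ·) (· < ·) (interp [W j, W i]) (interp [W i, W j])) := by
  refine ⟨fun i => ?_, ?_, fun i j h => ?_⟩
  · simp [interp, interpLetter]
    exact Prod.Lex.left _ _ (by norm_num)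
  · simp [interp, interpLetter]
    exact Prod.Lex.left _ _ (by norm_num)
  · simp [interp, interpLetter]
    exact Prod.Lex.right _ (by omega)
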